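/- arXiv:1502.01486 — 2 statements merged into one kernel-verified Lean document; each statement's English description precedes it below -/
import Mathlib

section
/- Let μ : ℍ → ℍ be μ(h) = (1/2)·h̄·i·h. Then the derivative of μ at h in direction v equals (1/2)(v̄·i·h + h̄·i·v); moreover, pairing with the imaginary unit i, the real part Re(ī · dμ_h(v)) equals ⟨I₁(K_h), v⟩ where K_h = i·h is the fundamental vector field of the U(1)-action h ↦ e^{iθ}h and I₁(v) = v·ī. In other words, μ paired with i is a Hamiltonian (moment map component) for the U(1)-action with respect to the Kähler form ω₁(v, w) = ⟨I₁v, w⟩. -/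
/-!
By the product rule and the derivative of `star`, the derivative of `y ↦ ȳ a y` at `h` is
`v ↦ v̄ a h + h̄ a v`. For the pairing with `i`, use that `Re` is invariant under cyclic
permutations and under conjugation, and that `ī = -i`: both `Re(ī v̄ i h)` and `Re(ī h̄ i v)`
reduce to `Re((i h ī) v̄) = ⟨i h ī, v⟩`.
-/

open Quaternion RealInnerProductSpace

noncomputable def qI : Quaternion ℝ := ⟨0, 1, 0, 0⟩

noncomputable def μ (h : Quaternion ℝ) : Quaternion ℝ := (1 / 2 : ℝ) • (star h * qI * h)

theorem exists_hasFDerivAt_star_mul_mul_self {𝕜 A : Type*} [NontriviallyNormedField 𝕜]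
    [StarRing 𝕜] [TrivialStar 𝕜] [NormedRing A] [NormedAlgebra 𝕜 A] [StarRing A]
    [StarModule 𝕜 A] [ContinuousStar A] (a x : A) :
    ∃ D : A →L[𝕜] A, HasFDerivAt (fun y => star y * a * y) D x ∧
      ∀ v, D v = star v * a * x + star x * a * v :=
  ⟨_, ((hasFDerivAt_id x).star.mul_const' a).fun_mul' (hasFDerivAt_id x), fun v => by
    simp [add_comm, mul_assoc]⟩

namespace Quaternion

instance {R : Type*} [CommRing R] [StarRing R] [TrivialStar R] : StarModule R ℍ[R] :=
  ⟨fun r a => by rw [star_trivial r]; exact star_smul r a⟩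

theorem re_mul_comm {R : Type*} [CommRing R] (a b : ℍ[R]) : (a * b).re = (b * a).re := by
  simp only [re_mul]; ring

theorem re_star_mul_star_mul_mul_add {u : ℍ} (hu : star u = -u) (h v : ℍ) :
    (star u * (star v * u * h + star h * u * v)).re = 2 * ⟪u * h * star u, v⟫ := by
  have hv : (star u * (star v * u * h)).re = ⟪u * h * star u, v⟫ := by
    rw [inner_def, re_mul_comm, re_mul_comm (u * h * star u)]
    simp only [mul_assoc]
  have hh : (star u * (star h * u * v)).re = (star u * (star v * u * h)).re := calc
    _ = (star v * star u * h * u).re := by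
      rw [← re_star]; simp only [star_mul, star_star, mul_assoc]
    _ = (u * (star v * star u * h)).re := re_mul_comm _ _
    _ = _ := by simp only [hu, mul_neg, neg_mul]
  rw [mul_add, re_add, hh, hv, two_mul]

end Quaternion

theorem star_qI : star qI = -qI := Quaternion.star_eq_neg.2 rfl

/-- the derivative of `μ(h) = (1/2)h̄·i·h` at `h` in direction `v` is
`(1/2)(v̄·i·h + h̄·i·v)`, and pairing with `i` gives the Hamiltonian identity
`Re(ī · dμ_h(v)) = ⟨I₁(K_h), v⟩`, where `K_h = i·h` is the fundamental vector field of the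
U(1)-action and `I₁(v) = v·ī`. -/
theorem moment_map_derivative (h : Quaternion ℝ) :
    ∃ D : Quaternion ℝ →L[ℝ] Quaternion ℝ,
      HasFDerivAt μ D h ∧
      (∀ v : Quaternion ℝ, D v = (1 / 2 : ℝ) • (star v * qI * h + star h * qI * v)) ∧
      (∀ v : Quaternion ℝ, (star qI * D v).re = ⟪(qI * h) * star qI, v⟫) := by
  obtain ⟨D, hD, hDv⟩ := exists_hasFDerivAt_star_mul_mul_self (𝕜 := ℝ) qI h
  have hformula (v : ℍ) :
      ((1 / 2 : ℝ) • D) v = (1 / 2 : ℝ) • (star v * qI * h + star h * qI * v) := by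
    rw [smul_apply, hDv]
  refine ⟨(1 / 2 : ℝ) • D, hD.fun_const_smul _, hformula, fun v => ?_⟩
  rw [hformula, mul_smul_comm, re_smul, re_star_mul_star_mul_mul_add star_qI, smul_eq_mul]
  ring
end

section
/- Let Ω₁, Ω₂, Ω₃ be the block operators on the product space E = A × S × H given (relative to the decomposition) by 𝓘₁ = diag(*, -I, -*), 𝓘₂ = [[0,0,*],[0,-J,0],[*,0,0]], 𝓘₃ = [[0,0,-1],[0,K,0],[1,0,0]], where * satisfies *² = -1 on A and H, and I, J, K satisfy the quaternionic relations on S. Then 𝓘₁, 𝓘₂, 𝓘₃ satisfy the quaternionic relations 𝓘₁² = 𝓘₂² = 𝓘₃² = 𝓘₁𝓘₂𝓘₃ = -id on E. -/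
section

variable {A S : Type*} [AddCommGroup A] [Module ℝ A] [AddCommGroup S] [Module ℝ S]

/-- The block operator `𝓘₁ = diag(*, -I, -*)` on `E = A × S × H` (identifying `H ≅ A`). -/
def blockI1 (star : A → A) (I : S → S) : A × S × A → A × S × A :=
  fun p => (star p.1, -(I p.2.1), -(star p.2.2))

/-- The block operator `𝓘₂ = [[0,0,*],[0,-J,0],[*,0,0]]`. -/
def blockI2 (star : A → A) (J : S → S) : A × S × A → A × S × A :=
  fun p => (star p.2.2, -(J p.2.1), star p.1)

/-- The block operator `𝓘₃ = [[0,0,-1],[0,K,0],[1,0,0]]`. -/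
def blockI3 (K : S → S) : A × S × A → A × S × A :=
  fun p => (-p.2.2, K p.2.1, p.1)

/-- if `*² = -id` on `A` (and on `H ≅ A`) and `I, J, K` satisfy the
quaternionic relations on `S`, then the block operators `𝓘₁, 𝓘₂, 𝓘₃` satisfy the
quaternionic relations `𝓘₁² = 𝓘₂² = 𝓘₃² = 𝓘₁𝓘₂𝓘₃ = -id` on `E = A × S × H`,
i.e. they define a hyperKähler structure on the configuration space. -/
theorem block_operators_quaternionic
    (star : A → A) (I J K : S → S)
    (hstar : ∀ a, star (star a) = -a)
    (hI : ∀ s, I (I s) = -s) (hJ : ∀ s, J (J s) = -s) (hK : ∀ s, K (K s) = -s)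
    (hIJK : ∀ s, I (J (K s)) = -s) :
    (∀ p : A × S × A, blockI1 star I (blockI1 star I p) = -p) ∧
    (∀ p : A × S × A, blockI2 star J (blockI2 star J p) = -p) ∧
    (∀ p : A × S × A, blockI3 K (blockI3 K p) = -p) ∧
    (∀ p : A × S × A, blockI1 star I (blockI2 star J (blockI3 K p)) = -p) := by
  have oddI : ∀ s, I (-s) = -I s := fun s => by
    have h1 := hI (I s); rw [hI s] at h1; rw [← h1]
  have oddJ : ∀ s, J (-s) = -J s := fun s => by
    have h1 := hJ (J s); rw [hJ s] at h1; rw [← h1]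
  have oddstar : ∀ a, star (-a) = -star a := fun a => by
    have h1 := hstar (star a); rw [hstar a] at h1; rw [← h1]
  refine ⟨fun p => ?_, fun p => ?_, fun p => ?_, fun p => ?_⟩ <;>
    simp [blockI1, blockI2, blockI3, oddI, oddJ, oddstar, hstar, hI, hJ, hK, hIJK,
      Prod.ext_iff]

end
end
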